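/- Let m, α ∈ (0,1) and define m̂ = mα/(1-(1-α)m). Then m̂ ∈ (0,1), m̂ < m (when α < 1), and the averaged matrix Γ̄ = (1-m̂)(αΦ + (1-α)I) + (m̂/n)u1_rᵀ satisfies Γ̄ = (m̂/m)Γ + (1 - m̂/m)I, where Γ = (1-m)Φ + (m/n)u1_rᵀ. Consequently the unique probability eigenvector of Γ with eigenvalue 1 is also the unique probability eigenvector of Γ̄ with eigenvalue 1. -/

import Mathlib

/-!
The matrix identity is coefficient bookkeeping: with `D = 1 - (1 - α) m` one has
`m̂ / m = α / D` and `m̂ D = m α`. Since `Γ̄ - I = (m̂ / m) (Γ - I)` with `m̂ / m ≠ 0`, the two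
matrices have the same fixed vectors. On probability vectors `Γ x = x` reads
`x = (1 - m) Φ x + (m / n) u`; as `Φ` preserves the `ℓ¹` mass of nonnegative vectors and
`1 - m < 1`, the map `x ↦ x - (1 - m) Φ x` is injective, hence bijective, and the negative part
of its solution vanishes, which gives existence and uniqueness of the probability fixed vector.
-/

/-- Column stochastic: nonnegative entries, each column sums to 1. -/
def ColStoch {r : ℕ} (A : Matrix (Fin r) (Fin r) ℝ) : Prop :=
  (∀ i j, 0 ≤ A i j) ∧ ∀ j, ∑ i, A i j = 1

/-- A probability vector. -/
def ProbVec {r : ℕ} (x : Fin r → ℝ) : Prop :=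
  (∀ i, 0 ≤ x i) ∧ ∑ i, x i = 1

open Matrix

lemma ColStoch.mem_colStochastic {r : ℕ} {A : Matrix (Fin r) (Fin r) ℝ} (hA : ColStoch A) :
    A ∈ colStochastic ℝ (Fin r) :=
  mem_colStochastic_iff_sum.2 hA

section ColStochastic

variable {𝕜 ι : Type*} [Field 𝕜] [LinearOrder 𝕜] [IsStrictOrderedRing 𝕜]
  [Fintype ι] [DecidableEq ι] {M : Matrix ι ι 𝕜} {c : 𝕜}

lemma mulVec_mono_of_mem_colStochastic (hM : M ∈ colStochastic 𝕜 ι) {x y : ι → 𝕜}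
    (hxy : x ≤ y) : M *ᵥ x ≤ M *ᵥ y := by
  have := nonneg_mulVec_of_mem_colStochastic hM (x := y - x) fun i => sub_nonneg.2 (hxy i)
  intro i
  simpa [mulVec_sub] using this i

/-- Summing coordinates shows that `c • M` shrinks the total mass of a nonnegative vector. -/
lemma eq_zero_of_le_smul_mulVec_of_mem_colStochastic (hM : M ∈ colStochastic 𝕜 ι) (hc : c < 1)
    {w : ι → 𝕜} (hw : 0 ≤ w) (h : w ≤ c • (M *ᵥ w)) : w = 0 := by
  have hsum : ∑ i, w i ≤ c * ∑ i, w i :=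
    calc ∑ i, w i ≤ ∑ i, c * (M *ᵥ w) i := Finset.sum_le_sum fun i _ => h i
      _ = c * ∑ i, w i := by rw [← Finset.mul_sum, sum_mulVec_of_mem_colStochastic hM]
  have hsum0 : ∑ i, w i = 0 := by
    nlinarith [Finset.sum_nonneg fun i (_ : i ∈ Finset.univ) => hw i]
  funext i
  exact (Finset.sum_eq_zero_iff_of_nonneg fun i _ => hw i).1 hsum0 i (Finset.mem_univ i)

/-- The negative part `x⁻` satisfies `x⁻ ≤ c • M *ᵥ x⁻`, so it vanishes. -/
lemma nonneg_of_eq_smul_mulVec_add_of_mem_colStochastic (hM : M ∈ colStochastic 𝕜 ι)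
    (hc0 : 0 ≤ c) (hc1 : c < 1) {x b : ι → 𝕜} (hb : 0 ≤ b) (hx : x = c • (M *ᵥ x) + b) :
    0 ≤ x := by
  have hneg : -x ≤ c • (M *ᵥ x⁻) :=
    calc -x ≤ c • (M *ᵥ -x) := by
          rw [mulVec_neg, smul_neg, neg_le_neg_iff]
          conv_rhs => rw [hx]
          exact le_add_of_nonneg_right hb
      _ ≤ c • (M *ᵥ x⁻) :=
          smul_le_smul_of_nonneg_left (mulVec_mono_of_mem_colStochastic hM (neg_le_negPart x)) hc0
  have hpos : 0 ≤ c • (M *ᵥ x⁻) :=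
    smul_nonneg hc0 (nonneg_mulVec_of_mem_colStochastic hM (negPart_nonneg x))
  have : x⁻ = 0 := eq_zero_of_le_smul_mulVec_of_mem_colStochastic hM hc1 (negPart_nonneg x)
    (sup_le hneg hpos)
  exact negPart_eq_zero.1 this

lemma mulVec_one_sub_smul_injective_of_mem_colStochastic (hM : M ∈ colStochastic 𝕜 ι)
    (hc0 : 0 ≤ c) (hc1 : c < 1) : Function.Injective (1 - c • M).mulVecLin := by
  refine (injective_iff_map_eq_zero _).2 fun d hd => ?_
  have hfix : d = c • (M *ᵥ d) := by simpa [sub_mulVec, sub_eq_zero] using hd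
  have hd_nonneg := nonneg_of_eq_smul_mulVec_add_of_mem_colStochastic hM hc0 hc1 le_rfl
    (x := d) (by rwa [add_zero])
  have hd_nonpos := nonneg_of_eq_smul_mulVec_add_of_mem_colStochastic hM hc0 hc1 le_rfl
    (x := -d) (by rw [add_zero, mulVec_neg, smul_neg, ← hfix])
  exact le_antisymm (neg_nonneg.1 hd_nonpos) hd_nonneg

lemma existsUnique_eq_smul_mulVec_add_of_mem_colStochastic (hM : M ∈ colStochastic 𝕜 ι)
    (hc0 : 0 ≤ c) (hc1 : c < 1) (b : ι → 𝕜) : ∃! x, x = c • (M *ᵥ x) + b := by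
  have hinj := mulVec_one_sub_smul_injective_of_mem_colStochastic hM hc0 hc1
  have hiff : ∀ x, x = c • (M *ᵥ x) + b ↔ (1 - c • M).mulVecLin x = b := fun x => by
    rw [mulVecLin_apply, sub_mulVec, one_mulVec, smul_mulVec, sub_eq_iff_eq_add']
  obtain ⟨x, hx⟩ := LinearMap.injective_iff_surjective.1 hinj b
  exact ⟨x, (hiff x).2 hx, fun y hy => hinj (((hiff y).1 hy).trans hx.symm)⟩

end ColStochastic

lemma mulVec_eq_self_iff_of_eq_smul_add_smul_one {𝕜 ι : Type*} [Field 𝕜] [Fintype ι]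
    [DecidableEq ι] {A B : Matrix ι ι 𝕜} {t : 𝕜} (ht : t ≠ 0)
    (hB : B = t • A + (1 - t) • 1) (x : ι → 𝕜) : B *ᵥ x = x ↔ A *ᵥ x = x := by
  have : B *ᵥ x - x = t • (A *ᵥ x - x) := by
    rw [hB, add_mulVec, smul_mulVec, smul_mulVec, one_mulVec]
    module
  rw [← sub_eq_zero, this, smul_eq_zero_iff_right ht, sub_eq_zero]

lemma of_const_mulVec {ι R : Type*} [Fintype ι] [CommSemiring R] (u x : ι → R) :
    Matrix.of (fun i (_ : ι) => u i) *ᵥ x = (∑ j, x j) • u := by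
  ext i
  simp [mulVec, dotProduct, Finset.mul_sum, mul_comm]

section Teleportation

variable {r : ℕ} {Φ : Matrix (Fin r) (Fin r) ℝ} {m : ℝ} {v : Fin r → ℝ}

lemma teleport_mulVec_of_sum_eq_one {x : Fin r → ℝ} (hx : ∑ i, x i = 1) :
    ((1 - m) • Φ + Matrix.of (fun i _ => v i)) *ᵥ x = (1 - m) • (Φ *ᵥ x) + v := by
  rw [add_mulVec, smul_mulVec, of_const_mulVec, hx, one_smul]

/-- The fixed point is the solution of `x = (1 - m) • Φ x + v`; its mass is forced to be `1`
because `Φ` preserves mass and `v` has mass `m`. -/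
lemma existsUnique_probVec_teleport_mulVec_eq_self (hΦ : Φ ∈ colStochastic ℝ (Fin r))
    (hm0 : 0 < m) (hm1 : m ≤ 1) (hv : 0 ≤ v) (hvsum : ∑ i, v i = m) :
    ∃! x, ProbVec x ∧ ((1 - m) • Φ + Matrix.of (fun i _ => v i)) *ᵥ x = x := by
  obtain ⟨x, hx, hxuniq⟩ := existsUnique_eq_smul_mulVec_add_of_mem_colStochastic hΦ
    (sub_nonneg.2 hm1) (sub_lt_self 1 hm0) v
  have hxsum : ∑ i, x i = 1 := by
    have hmass : ∑ i, x i = (1 - m) * ∑ i, x i + m := by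
      conv_lhs => rw [hx]
      simp only [Pi.add_apply, Pi.smul_apply, smul_eq_mul, Finset.sum_add_distrib,
        ← Finset.mul_sum, sum_mulVec_of_mem_colStochastic hΦ, hvsum]
    have : m * (∑ i, x i - 1) = 0 := by linarith
    linarith [(mul_eq_zero.1 this).resolve_left hm0.ne']
  have hxnonneg : 0 ≤ x := nonneg_of_eq_smul_mulVec_add_of_mem_colStochastic hΦ
    (sub_nonneg.2 hm1) (sub_lt_self 1 hm0) hv hx
  refine ⟨x, ⟨⟨hxnonneg, hxsum⟩, ?_⟩, ?_⟩
  · rw [teleport_mulVec_of_sum_eq_one hxsum]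
    exact hx.symm
  · rintro y ⟨hy, hyfix⟩
    rw [teleport_mulVec_of_sum_eq_one hy.2] at hyfix
    exact hxuniq y hyfix.symm

end Teleportation

section Mhat

variable {m α mh : ℝ}

lemma mhat_bounds (hm0 : 0 < m) (hm1 : m < 1) (hα0 : 0 < α) (hα1 : α < 1)
    (hmh : mh = m * α / (1 - (1 - α) * m)) : 0 < mh ∧ mh < 1 ∧ mh < m := by
  have hD : 0 < 1 - (1 - α) * m := by nlinarith
  subst hmh
  refine ⟨by positivity, (div_lt_one hD).2 (by nlinarith), (div_lt_iff₀ hD).2 ?_⟩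
  nlinarith [mul_pos hm0 (mul_pos (sub_pos.2 hα1) (sub_pos.2 hm1))]

lemma averaged_eq_lazy_mixture {E : Type*} [AddCommGroup E] [Module ℝ E] (hm : m ≠ 0)
    (hD : 1 - (1 - α) * m ≠ 0) (hmh : mh = m * α / (1 - (1 - α) * m)) (N : ℝ) (P I U : E) :
    (1 - mh) • (α • P + (1 - α) • I) + (mh / N) • U
      = (mh / m) • ((1 - m) • P + (m / N) • U) + (1 - mh / m) • I := by
  have hmhD : mh * (1 - (1 - α) * m) = m * α := by
    rw [hmh, div_mul_cancel₀ _ hD]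
  have hP : (1 - mh) * α = mh / m * (1 - m) := by
    field_simp
    linear_combination -hmhD
  have hI : (1 - mh) * (1 - α) = 1 - mh / m := by
    field_simp
    linear_combination hmhD
  have hU : mh / N = mh / m * (m / N) := by
    field_simp
  linear_combination (norm := module) hP • P + hI • I + hU • U

end Mhat

theorem stmt18_general {r : ℕ}
    (m α : ℝ) (hm0 : 0 < m) (hm1 : m < 1) (hα0 : 0 < α) (hα1 : α < 1)
    (mh : ℝ) (hmh : mh = m * α / (1 - (1 - α) * m))
    (Φ : Matrix (Fin r) (Fin r) ℝ) (hΦ : ColStoch Φ)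
    (n : ℕ) (hn : 0 < n) (u : Fin r → ℝ)
    (hu : ∀ i, 0 < u i) (husum : ∑ i, u i = (n : ℝ))
    (Γ Γbar : Matrix (Fin r) (Fin r) ℝ)
    (hΓ : Γ = (1 - m) • Φ + (m / n) • Matrix.of (fun i _ : Fin r => u i))
    (hΓbar : Γbar = (1 - mh) • (α • Φ + (1 - α) • (1 : Matrix (Fin r) (Fin r) ℝ))
                  + (mh / n) • Matrix.of (fun i _ : Fin r => u i)) :
    0 < mh ∧ mh < 1 ∧ mh < m ∧
    Γbar = (mh / m) • Γ + (1 - mh / m) • (1 : Matrix (Fin r) (Fin r) ℝ) ∧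
    (∃! x : Fin r → ℝ, ProbVec x ∧ Γ.mulVec x = x) ∧
    (∀ x : Fin r → ℝ, ProbVec x → (Γ.mulVec x = x ↔ Γbar.mulVec x = x)) := by
  obtain ⟨hmh0, hmh1, hmhm⟩ := mhat_bounds hm0 hm1 hα0 hα1 hmh
  have hD : 1 - (1 - α) * m ≠ 0 := by nlinarith
  have hlazy : Γbar = (mh / m) • Γ + (1 - mh / m) • (1 : Matrix (Fin r) (Fin r) ℝ) := by
    rw [hΓbar, hΓ]
    exact averaged_eq_lazy_mixture hm0.ne' hD hmh _ _ _ _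
  have hteleport : Γ = (1 - m) • Φ + Matrix.of (fun i _ => ((m / n) • u) i) := by
    rw [hΓ, smul_of]
    rfl
  have hmass : ∑ i, ((m / n) • u) i = m := by
    simp only [Pi.smul_apply, smul_eq_mul, ← Finset.mul_sum, husum]
    field_simp
  refine ⟨hmh0, hmh1, hmhm, hlazy, ?_, fun x _ =>
    (mulVec_eq_self_iff_of_eq_smul_add_smul_one (div_pos hmh0 hm0).ne' hlazy x).symm⟩
  rw [hteleport]
  exact existsUnique_probVec_teleport_mulVec_eq_self hΦ.mem_colStochastic hm0 hm1.le
    (smul_nonneg (by positivity) fun i => (hu i).le) hmass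

/-- With `m̂ = mα/(1-(1-α)m)` one has `m̂ ∈ (0,1)`, `m̂ < m` when `α < 1`,
`Γ̄ = (m̂/m)Γ + (1-m̂/m)I`, and the unique probability eigenvector of `Γ` for
eigenvalue 1 is also the unique probability eigenvector of `Γ̄`. -/
theorem stmt18 {r : ℕ} (hr : 0 < r)
    (m α : ℝ) (hm0 : 0 < m) (hm1 : m < 1) (hα0 : 0 < α) (hα1 : α < 1)
    (mh : ℝ) (hmh : mh = m * α / (1 - (1 - α) * m))
    (Φ : Matrix (Fin r) (Fin r) ℝ) (hΦ : ColStoch Φ)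
    (n : ℕ) (hn : 0 < n) (u : Fin r → ℝ)
    (hu : ∀ i, 0 < u i) (husum : ∑ i, u i = (n : ℝ))
    (Γ Γbar : Matrix (Fin r) (Fin r) ℝ)
    (hΓ : Γ = (1 - m) • Φ + (m / n) • Matrix.of (fun i _ : Fin r => u i))
    (hΓbar : Γbar = (1 - mh) • (α • Φ + (1 - α) • (1 : Matrix (Fin r) (Fin r) ℝ))
                  + (mh / n) • Matrix.of (fun i _ : Fin r => u i)) :
    0 < mh ∧ mh < 1 ∧ mh < m ∧
    Γbar = (mh / m) • Γ + (1 - mh / m) • (1 : Matrix (Fin r) (Fin r) ℝ) ∧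
    (∃! x : Fin r → ℝ, ProbVec x ∧ Γ.mulVec x = x) ∧
    (∀ x : Fin r → ℝ, ProbVec x → (Γ.mulVec x = x ↔ Γbar.mulVec x = x)) :=
  stmt18_general m α hm0 hm1 hα0 hα1 mh hmh Φ hΦ n hn u hu husum Γ Γbar hΓ hΓbar
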